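/- There exists a universal constant C > 0 with the following property. For every integer d ≥ 1, every probability density p₀ on ℝ^d, every R > 0 with ∫_{‖x‖₂ < R} p₀(x) dx > 1/2, every t ∈ (0,1), and every y ∈ ℝ^d, the score of the smoothed density satisfies ‖∇ log q_t(y)‖₂ ≤ C·( (‖y‖₂ + √t·R)/(1−t) + d/√(1−t) ). -/

import Mathlib

open MeasureTheory Real

/-- The Gaussian kernel `G_t(y,x) = (2π(1−t))^{−d/2} exp(−‖y−√t·x‖²/(2(1−t)))`. -/
noncomputable def gaussKernel (d : ℕ) (t : ℝ) (y x : EuclideanSpace ℝ (Fin d)) : ℝ :=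
  (2 * π * (1 - t)) ^ (-(d : ℝ) / 2) *
    Real.exp (-‖y - Real.sqrt t • x‖ ^ 2 / (2 * (1 - t)))

/-- The smoothed density `q_t(y) = ∫ p₀(x) G_t(y,x) dx`. -/
noncomputable def smoothed (d : ℕ) (p₀ : EuclideanSpace ℝ (Fin d) → ℝ) (t : ℝ)
    (y : EuclideanSpace ℝ (Fin d)) : ℝ :=
  ∫ x, p₀ x * gaussKernel d t y x

/-- The posterior density `π_t(x|y) = p₀(x) G_t(y,x)/q_t(y)`. -/
noncomputable def post (d : ℕ) (p₀ : EuclideanSpace ℝ (Fin d) → ℝ) (t : ℝ)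
    (x y : EuclideanSpace ℝ (Fin d)) : ℝ :=
  p₀ x * gaussKernel d t y x / smoothed d p₀ t y

/-- The conditional reward `ρ_t(y) = ∫ r(x) π_t(x|y) dx`. -/
noncomputable def condReward (d : ℕ) (p₀ r : EuclideanSpace ℝ (Fin d) → ℝ) (t : ℝ)
    (y : EuclideanSpace ℝ (Fin d)) : ℝ :=
  ∫ x, r x * post d p₀ t x y

/-- The reward-reweighted density `p₀^r(x) = r(x)p₀(x)/∫ r p₀`. -/
noncomputable def reweighted (d : ℕ) (p₀ r : EuclideanSpace ℝ (Fin d) → ℝ)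
    (x : EuclideanSpace ℝ (Fin d)) : ℝ :=
  r x * p₀ x / ∫ x', r x' * p₀ x'

/-- A probability density on `ℝ^d`: measurable, nonnegative, integrating to one. -/
def IsDensity {d : ℕ} (p : EuclideanSpace ℝ (Fin d) → ℝ) : Prop :=
  Measurable p ∧ (∀ x, 0 ≤ p x) ∧ ∫ x, p x = 1

/-! Differentiating under the integral, `∇ q_t(y) = (1-t)⁻¹ ∫ p₀(x) G_t(y,x) (√t x - y) dx`, so
`‖∇ log q_t(y)‖ ≤ ((1-t) q_t(y))⁻¹ ∫ p₀(x) G_t(y,x) ‖y - √t x‖ dx`. Put `A = ‖y‖ + √t R` and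
`M = A + 2√(1-t)`. The Gaussian tail bound `r e^{-r²/2σ} ≤ M (e^{-r²/2σ} + e^{-A²/2σ})` bounds the
integral by `M (q_t(y) + c e^{-A²/2(1-t)})`, where `c` is the normalising constant of `G_t`; on the
ball of radius `R` the kernel is at least `c e^{-A²/2(1-t)}`, and that ball carries mass `> 1/2`,
so `c e^{-A²/2(1-t)} ≤ 2 q_t(y)`. Hence `‖∇ log q_t(y)‖ ≤ 3M/(1-t) ≤ 6 (A/(1-t) + d/√(1-t))`. -/

theorem mul_exp_neg_sq_div_le {σ A r : ℝ} (hσ : 0 < σ) (hA : 0 ≤ A) (hr : 0 ≤ r) :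
    r * exp (-r ^ 2 / (2 * σ)) ≤
      (A + 2 * √σ) * (exp (-r ^ 2 / (2 * σ)) + exp (-A ^ 2 / (2 * σ))) := by
  set M := A + 2 * √σ
  have hs : 0 < √σ := sqrt_pos.2 hσ
  have hss : √σ ^ 2 = σ := sq_sqrt hσ.le
  rcases le_or_gt r M with hrM | hrM
  · nlinarith [exp_pos (-r ^ 2 / (2 * σ)), exp_pos (-A ^ 2 / (2 * σ))]
  -- beyond `M`, `1 + u ≤ exp u` shows the tail has decayed below its value at `A`
  set u := (r ^ 2 - A ^ 2) / (2 * σ)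
  have hlin : r ≤ M * (1 + u) := by
    have hprod : 4 * σ * r ≤ M * (r ^ 2 - A ^ 2) := by
      nlinarith [mul_le_mul (show 2 * √σ ≤ M by linarith) (show 2 * √σ ≤ r - A by linarith)
        (by positivity) (by positivity), mul_nonneg hr hA]
    rw [mul_add, mul_one, ← mul_div_assoc, ← sub_le_iff_le_add', le_div_iff₀ (by positivity)]
    nlinarith
  have hsplit : exp (-r ^ 2 / (2 * σ)) = exp (-A ^ 2 / (2 * σ)) * exp (-u) := by
    rw [← exp_add]; congr 1; simp only [u]; field_simp; ring
  have hdecay : r * exp (-u) ≤ M := by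
    calc r * exp (-u) ≤ M * exp u * exp (-u) := by
          gcongr; exact hlin.trans (by gcongr; linarith [add_one_le_exp u])
      _ = M := by rw [mul_assoc, ← exp_add, add_neg_cancel, exp_zero, mul_one]
  calc r * exp (-r ^ 2 / (2 * σ)) = r * exp (-u) * exp (-A ^ 2 / (2 * σ)) := by
        rw [hsplit]; ring
    _ ≤ M * exp (-A ^ 2 / (2 * σ)) := by gcongr
    _ ≤ _ := by gcongr; linarith [exp_pos (-r ^ 2 / (2 * σ))]

theorem three_mul_add_div_sq_le {A s D : ℝ} (hA : 0 ≤ A) (hs : 0 < s) (hD : 1 ≤ D) :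
    3 * ((A + 2 * s) / s ^ 2) ≤ 6 * (A / s ^ 2 + D / s) := by
  have hA' : 0 ≤ A / s ^ 2 := by positivity
  have hD' : 1 / s ≤ D / s := by gcongr
  calc 3 * ((A + 2 * s) / s ^ 2) = 3 * (A / s ^ 2) + 6 * (1 / s) := by field_simp; ring
    _ ≤ 6 * (A / s ^ 2 + D / s) := by linarith

theorem HasGradientAt.log {F : Type*} [NormedAddCommGroup F] [InnerProductSpace ℝ F]
    [CompleteSpace F] {f : F → ℝ} {g x : F} (hf : HasGradientAt f g x) (hx : f x ≠ 0) :
    HasGradientAt (fun z => Real.log (f z)) ((f x)⁻¹ • g) x := by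
  rw [hasGradientAt_iff_hasFDerivAt] at hf ⊢
  simpa only [map_smul] using hf.log hx

noncomputable def gaussConst (d : ℕ) (t : ℝ) : ℝ := (2 * π * (1 - t)) ^ (-(d : ℝ) / 2)

section GaussKernel

variable {d : ℕ} {t : ℝ}

theorem gaussKernel_eq (y x : EuclideanSpace ℝ (Fin d)) :
    gaussKernel d t y x = gaussConst d t * exp (-‖y - √t • x‖ ^ 2 / (2 * (1 - t))) := rfl

theorem gaussConst_pos (ht : t < 1) : 0 < gaussConst d t := by
  have : 0 < 1 - t := sub_pos.2 ht
  unfold gaussConst; positivity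

theorem gaussKernel_pos (ht : t < 1) (y x : EuclideanSpace ℝ (Fin d)) :
    0 < gaussKernel d t y x := by
  rw [gaussKernel_eq]; exact mul_pos (gaussConst_pos ht) (exp_pos _)

theorem gaussKernel_le_gaussConst (ht : t < 1) (y x : EuclideanSpace ℝ (Fin d)) :
    gaussKernel d t y x ≤ gaussConst d t := by
  have : 0 < 1 - t := sub_pos.2 ht
  rw [gaussKernel_eq]
  refine mul_le_of_le_one_right (gaussConst_pos ht).le (exp_le_one_iff.2 ?_)
  exact div_nonpos_of_nonpos_of_nonneg (by simp) (by positivity)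

theorem continuous_gaussKernel (y : EuclideanSpace ℝ (Fin d)) :
    Continuous (gaussKernel d t y) := by
  unfold gaussKernel; fun_prop

theorem gaussConst_mul_exp_le_gaussKernel (ht : t < 1) {R : ℝ} {y x : EuclideanSpace ℝ (Fin d)}
    (hx : ‖x‖ ≤ R) :
    gaussConst d t * exp (-(‖y‖ + √t * R) ^ 2 / (2 * (1 - t))) ≤ gaussKernel d t y x := by
  have : 0 < 1 - t := sub_pos.2 ht
  have hdist : ‖y - √t • x‖ ≤ ‖y‖ + √t * R :=
    calc ‖y - √t • x‖ ≤ ‖y‖ + √t * ‖x‖ := by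
          simpa [norm_smul, abs_of_nonneg (sqrt_nonneg t)] using norm_sub_le y (√t • x)
      _ ≤ ‖y‖ + √t * R := by gcongr
  rw [gaussKernel_eq]
  exact mul_le_mul_of_nonneg_left (by gcongr) (gaussConst_pos ht).le

theorem gaussKernel_mul_norm_le (ht : t < 1) {A : ℝ} (hA : 0 ≤ A)
    (y x : EuclideanSpace ℝ (Fin d)) :
    gaussKernel d t y x * ‖y - √t • x‖ ≤
      (A + 2 * √(1 - t)) *
        (gaussKernel d t y x + gaussConst d t * exp (-A ^ 2 / (2 * (1 - t)))) := by
  have h := mul_exp_neg_sq_div_le (sub_pos.2 ht) hA (norm_nonneg (y - √t • x))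
  simp only [gaussKernel_eq]
  calc _ = gaussConst d t * (‖y - √t • x‖ * exp (-‖y - √t • x‖ ^ 2 / (2 * (1 - t)))) := by ring
    _ ≤ _ := mul_le_mul_of_nonneg_left h (gaussConst_pos ht).le
    _ = _ := by ring

theorem gaussKernel_mul_norm_le_gaussConst (ht : t < 1) (y x : EuclideanSpace ℝ (Fin d)) :
    gaussKernel d t y x * ‖y - √t • x‖ ≤ 4 * √(1 - t) * gaussConst d t := by
  have h := gaussKernel_mul_norm_le ht le_rfl y x
  have hG := gaussKernel_le_gaussConst ht y x
  simp only [ne_eq, OfNat.ofNat_ne_zero, not_false_eq_true, zero_pow, neg_zero, zero_div,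
    exp_zero, mul_one, zero_add] at h
  nlinarith [sqrt_nonneg (1 - t)]

theorem hasGradientAt_gaussKernel (ht : t ≠ 1) (x y : EuclideanSpace ℝ (Fin d)) :
    HasGradientAt (fun z => gaussKernel d t z x)
      ((gaussKernel d t y x / (1 - t)) • (√t • x - y)) y := by
  have hsq := ((hasFDerivAt_id y).sub_const (√t • x)).norm_sq
  have hφ : HasDerivAt (fun u : ℝ => gaussConst d t * exp (-u / (2 * (1 - t))))
      (gaussKernel d t y x * (-1 / (2 * (1 - t)))) (‖y - √t • x‖ ^ 2) := by
    have := (((hasDerivAt_id (‖y - √t • x‖ ^ 2)).neg).div_const (2 * (1 - t))).exp.const_mul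
      (gaussConst d t)
    exact this.congr_deriv (by simp [gaussKernel_eq]; ring)
  rw [hasGradientAt_iff_hasFDerivAt]
  refine (hφ.comp_hasFDerivAt y hsq).congr_fderiv ?_
  ext v
  have : (1 : ℝ) - t ≠ 0 := sub_ne_zero.2 ht.symm
  simp only [id_eq, map_sub, map_smul, ContinuousLinearMap.comp_id, smul_apply, sub_apply,
    coe_innerSL_apply, smul_eq_mul, nsmul_eq_mul, Nat.cast_ofNat,
    InnerProductSpace.toDual_apply_apply]
  field_simp
  ring

end GaussKernel

section Smoothed

variable {d : ℕ} {p₀ : EuclideanSpace ℝ (Fin d) → ℝ} {t : ℝ}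

theorem integrable_mul_gaussKernel (ht : t < 1) (hp : Integrable p₀)
    (y : EuclideanSpace ℝ (Fin d)) : Integrable (fun x => p₀ x * gaussKernel d t y x) := by
  refine hp.mul_bdd (c := gaussConst d t) (continuous_gaussKernel y).aestronglyMeasurable
    (.of_forall fun x => ?_)
  rw [norm_of_nonneg (gaussKernel_pos ht y x).le]
  exact gaussKernel_le_gaussConst ht y x

theorem hasGradientAt_smoothed (ht : t < 1) (hp : Integrable p₀) (y : EuclideanSpace ℝ (Fin d)) :
    HasGradientAt (smoothed d p₀ t)
      (∫ x, (p₀ x * gaussKernel d t y x / (1 - t)) • (√t • x - y)) y := by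
  have hσ : 0 < 1 - t := sub_pos.2 ht
  set w := fun z x => (p₀ x * gaussKernel d t z x / (1 - t)) • (√t • x - z)
  have hw_meas : AEStronglyMeasurable (w y) := by
    refine AEStronglyMeasurable.fun_smul ?_
      (by fun_prop : Continuous fun x : EuclideanSpace ℝ (Fin d) => √t • x - y).aestronglyMeasurable
    exact ((integrable_mul_gaussKernel ht hp y).div_const (1 - t)).aestronglyMeasurable
  have hw_norm : ∀ z x, ‖w z x‖ ≤ ‖p₀ x‖ * (4 * √(1 - t) * gaussConst d t / (1 - t)) := by
    intro z x
    have h := gaussKernel_mul_norm_le_gaussConst ht z x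
    simp only [w, norm_smul, norm_div, norm_mul, norm_of_nonneg (gaussKernel_pos ht z x).le,
      norm_of_nonneg hσ.le, norm_sub_rev (√t • x) z]
    rw [mul_div_assoc, mul_assoc, ← mul_div_right_comm]
    gcongr
  have hderiv := hasFDerivAt_integral_of_dominated_of_fderiv_le (μ := volume) Filter.univ_mem
    (F := fun z x => p₀ x * gaussKernel d t z x) (F' := fun z x => innerSL ℝ (w z x))
    (.of_forall fun z => (integrable_mul_gaussKernel ht hp z).aestronglyMeasurable)
    (integrable_mul_gaussKernel ht hp y)
    ((innerSL ℝ).continuous.comp_aestronglyMeasurable hw_meas)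
    (.of_forall fun x z _ => by simpa using hw_norm z x) (hp.norm.mul_const _)
    (.of_forall fun x z _ => by
      refine ((hasGradientAt_iff_hasFDerivAt.1 (hasGradientAt_gaussKernel ht.ne x z)).const_mul
        (p₀ x)).congr_fderiv ?_
      ext v
      simp [w, mul_div_assoc, mul_assoc])
  have hw_int : Integrable (w y) := (hp.norm.mul_const _).mono' hw_meas (.of_forall (hw_norm y))
  rw [ContinuousLinearMap.integral_comp_comm _ hw_int] at hderiv
  rw [hasGradientAt_iff_hasFDerivAt]
  exact hderiv.congr_fderiv (by ext v; rfl)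

theorem mul_setIntegral_le_smoothed (ht : t < 1) (hp0 : ∀ x, 0 ≤ p₀ x) (hp : Integrable p₀)
    (R : ℝ) (y : EuclideanSpace ℝ (Fin d)) :
    gaussConst d t * exp (-(‖y‖ + √t * R) ^ 2 / (2 * (1 - t))) *
        ∫ x in {x : EuclideanSpace ℝ (Fin d) | ‖x‖ < R}, p₀ x ≤ smoothed d p₀ t y := by
  set e := gaussConst d t * exp (-(‖y‖ + √t * R) ^ 2 / (2 * (1 - t)))
  have hS : MeasurableSet {x : EuclideanSpace ℝ (Fin d) | ‖x‖ < R} :=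
    measurableSet_lt measurable_norm measurable_const
  have hint := integrable_mul_gaussKernel ht hp y
  calc e * ∫ x in {x | ‖x‖ < R}, p₀ x = ∫ x in {x | ‖x‖ < R}, e * p₀ x :=
        (integral_const_mul e _).symm
    _ ≤ ∫ x in {x | ‖x‖ < R}, p₀ x * gaussKernel d t y x := by
        refine setIntegral_mono_on (hp.const_mul e).integrableOn hint.integrableOn hS
          fun x hx => ?_
        rw [mul_comm]
        exact mul_le_mul_of_nonneg_left (gaussConst_mul_exp_le_gaussKernel ht (le_of_lt hx))
          (hp0 x)
    _ ≤ smoothed d p₀ t y :=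
        setIntegral_le_integral hint
          (.of_forall fun x => mul_nonneg (hp0 x) (gaussKernel_pos ht y x).le)

theorem norm_gradient_smoothed_le (ht : t < 1) (hp0 : ∀ x, 0 ≤ p₀ x) (hp1 : ∫ x, p₀ x = 1)
    {A : ℝ} (hA : 0 ≤ A) (y : EuclideanSpace ℝ (Fin d)) :
    ‖gradient (smoothed d p₀ t) y‖ ≤
      (A + 2 * √(1 - t)) / (1 - t) *
        (smoothed d p₀ t y + gaussConst d t * exp (-A ^ 2 / (2 * (1 - t)))) := by
  have hσ : 0 < 1 - t := sub_pos.2 ht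
  have hp := integrable_of_integral_eq_one hp1
  set e := gaussConst d t * exp (-A ^ 2 / (2 * (1 - t)))
  set K := (A + 2 * √(1 - t)) / (1 - t)
  have hint := integrable_mul_gaussKernel ht hp y
  rw [(hasGradientAt_smoothed ht hp y).gradient]
  calc _ ≤ ∫ x, K * (p₀ x * gaussKernel d t y x + p₀ x * e) := by
        refine norm_integral_le_of_norm_le ((hint.add (hp.mul_const e)).const_mul K)
          (.of_forall fun x => ?_)
        have h := mul_le_mul_of_nonneg_left (gaussKernel_mul_norm_le ht hA y x) (hp0 x)
        rw [norm_smul,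
          norm_of_nonneg (div_nonneg (mul_nonneg (hp0 x) (gaussKernel_pos ht y x).le) hσ.le),
          norm_sub_rev, div_mul_eq_mul_div, div_le_iff₀ hσ]
        calc _ = p₀ x * (gaussKernel d t y x * ‖y - √t • x‖) := by ring
          _ ≤ _ := h
          _ = _ := by simp only [K, e]; field_simp
    _ = K * (smoothed d p₀ t y + e) := by
        rw [integral_const_mul, integral_add hint (hp.mul_const e), integral_mul_const, hp1,
          one_mul]
        rfl

theorem norm_gradient_log_smoothed_le (ht : t < 1) (hp0 : ∀ x, 0 ≤ p₀ x)
    (hp1 : ∫ x, p₀ x = 1) {A : ℝ} (hA : 0 ≤ A) {y : EuclideanSpace ℝ (Fin d)}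
    (hq : gaussConst d t * exp (-A ^ 2 / (2 * (1 - t))) ≤ 2 * smoothed d p₀ t y) :
    ‖gradient (fun z => Real.log (smoothed d p₀ t z)) y‖ ≤
      3 * ((A + 2 * √(1 - t)) / (1 - t)) := by
  have hσ : 0 < 1 - t := sub_pos.2 ht
  have hq0 : 0 < smoothed d p₀ t y := by
    have := mul_pos (gaussConst_pos (d := d) ht) (exp_pos (-A ^ 2 / (2 * (1 - t))))
    linarith
  have hgrad := hasGradientAt_smoothed ht (integrable_of_integral_eq_one hp1) y
  rw [(hgrad.log hq0.ne').gradient, ← hgrad.gradient, norm_smul, norm_inv,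
    norm_of_nonneg hq0.le, inv_mul_le_iff₀ hq0]
  have hK : 0 ≤ (A + 2 * √(1 - t)) / (1 - t) := by positivity
  calc _ ≤ _ := norm_gradient_smoothed_le ht hp0 hp1 hA y
    _ ≤ (A + 2 * √(1 - t)) / (1 - t) * (smoothed d p₀ t y + 2 * smoothed d p₀ t y) := by
        gcongr
    _ = _ := by ring

end Smoothed

/-- Universal score-norm bound: there is a universal constant `C > 0` such
that `‖∇ log q_t(y)‖ ≤ C·((‖y‖+√t·R)/(1−t) + d/√(1−t))` whenever `∫_{‖x‖<R} p₀ > 1/2`. -/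
theorem stmt_8 :
    ∃ C : ℝ, 0 < C ∧
      ∀ (d : ℕ), 1 ≤ d →
      ∀ p₀ : EuclideanSpace ℝ (Fin d) → ℝ, IsDensity p₀ →
      ∀ R : ℝ, 0 < R →
        (1 / 2 < ∫ x in {x : EuclideanSpace ℝ (Fin d) | ‖x‖ < R}, p₀ x) →
      ∀ t : ℝ, t ∈ Set.Ioo (0 : ℝ) 1 →
      ∀ y : EuclideanSpace ℝ (Fin d),
        ‖gradient (fun z => Real.log (smoothed d p₀ t z)) y‖ ≤
          C * ((‖y‖ + Real.sqrt t * R) / (1 - t) + d / Real.sqrt (1 - t)) := by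
  refine ⟨6, by norm_num, fun d hd p₀ ⟨_, hp0, hp1⟩ R hR hmass t ⟨_, ht⟩ y => ?_⟩
  set A := ‖y‖ + √t * R
  have hq : gaussConst d t * exp (-A ^ 2 / (2 * (1 - t))) ≤ 2 * smoothed d p₀ t y := by
    have hmass_le := mul_setIntegral_le_smoothed ht hp0 (integrable_of_integral_eq_one hp1) R y
    have he := mul_pos (gaussConst_pos (d := d) ht) (exp_pos (-A ^ 2 / (2 * (1 - t))))
    nlinarith
  refine (norm_gradient_log_smoothed_le ht hp0 hp1 (by positivity) hq).trans ?_
  have hss : √(1 - t) ^ 2 = 1 - t := sq_sqrt (sub_pos.2 ht).le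
  have h := three_mul_add_div_sq_le (A := A) (by positivity) (sqrt_pos.2 (sub_pos.2 ht))
    (show (1 : ℝ) ≤ d by exact_mod_cast hd)
  rwa [hss] at h
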